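/- arXiv:2401.17218 — 2 statements merged into one kernel-verified Lean document; each statement's English description precedes it below -/
import Mathlib

section
/- For every m ≥ 2 and every path-connected metric space X, dTC_m(X) ≤ TC_m(X), where TC_m is the classical m-th sequential topological complexity. -/
/-!
Take a cover of `X^m` by `k + 1` open sets carrying continuous motion planners `s_i` and a
partition of unity `(f_i)` subordinate to it, and send `x` to the measure `∑ f_i(x) δ_{s_i(x)}`.
It is carried by at most `k + 1` paths through the prescribed points, and it depends continuously
on `x` for the Lévy–Prokhorov metric: changing the weights by a total of `ε` and moving the atoms
of positive weight by less than `ε` moves the measure by at most `ε`.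
-/

open MeasureTheory unitInterval

noncomputable section

/-- The path space `P(X) = C([0,1], X)` with the compact-open topology. -/
abbrev PathSp (X : Type*) [TopologicalSpace X] : Type _ := C(unitInterval, X)

/-- The space `B_n(Z)` of probability measures on a metric space `Z` supported on at most
`n` points, as a subspace of the space of probability measures with the Lévy–Prokhorov metric. -/
def Bmeas (n : ℕ) (Z : Type*) [MetricSpace Z] : Type _ :=
  letI : MeasurableSpace Z := borel Z
  {μ : LevyProkhorov (ProbabilityMeasure Z) //
    ∃ S : Finset Z, S.card ≤ n ∧ (LevyProkhorov.toMeasureEquiv μ : ProbabilityMeasure Z) (↑S : Set Z) = 1}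

noncomputable instance (n : ℕ) (Z : Type*) [MetricSpace Z] : TopologicalSpace (Bmeas n Z) :=
  letI : MeasurableSpace Z := borel Z
  haveI : BorelSpace Z := ⟨rfl⟩
  instTopologicalSpaceSubtype

/-- The underlying probability measure of an element of `B_n(Z)`. -/
def Bmeas.meas {n : ℕ} {Z : Type*} [MetricSpace Z] (μ : Bmeas n Z) :
    @ProbabilityMeasure Z (borel Z) :=
  LevyProkhorov.toMeasureEquiv μ.1

/-- `μ ∈ B_n(Z)` is supported on the set `A`. -/
def DistributedOn {Z : Type*} [MetricSpace Z] {n : ℕ} (μ : Bmeas n Z) (A : Set Z) : Prop :=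
  ∃ S : Finset Z, (↑S : Set Z) ⊆ A ∧ Bmeas.meas μ (↑S : Set Z) = 1

/-- The time points `t_j = j/(m-1)`, `j = 0, …, m-1`, in `[0,1]`. -/
def tpt (m : ℕ) (j : Fin m) : unitInterval :=
  Set.projIcc 0 1 zero_le_one ((j : ℝ) / ((m : ℝ) - 1))

/-- A `k`-distributed `m`-navigation algorithm on `X`. -/
def IsNavAlg (m k : ℕ) {X : Type*} [MetricSpace X]
    (s : (Fin m → X) → Bmeas k (PathSp X)) : Prop :=
  Continuous s ∧ ∀ x : Fin m → X,
    DistributedOn (s x) {φ : PathSp X | ∀ j : Fin m, φ (tpt m j) = x j}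

/-- The `m`-th sequential distributional topological complexity. -/
noncomputable def dTC (m : ℕ) (X : Type*) [MetricSpace X] : ℕ∞ :=
  sInf {c : ℕ∞ | ∃ k : ℕ, c = k ∧
    ∃ s : (Fin m → X) → Bmeas (k + 1) (PathSp X), IsNavAlg m (k + 1) s}

/-- A `k`-contraction of `Y` to the point `y₀`. -/
def IsContr (k : ℕ) {Y : Type*} [MetricSpace Y] (y₀ : Y)
    (H : Y → Bmeas k (PathSp Y)) : Prop :=
  Continuous H ∧ ∀ y : Y,
    DistributedOn (H y) {φ : PathSp Y | φ 0 = y ∧ φ 1 = y₀}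

/-- The distributional Lusternik–Schnirelmann category. -/
noncomputable def dcat (Y : Type*) [MetricSpace Y] : ℕ∞ :=
  sInf {c : ℕ∞ | ∃ k : ℕ, c = k ∧
    ∃ (y₀ : Y) (H : Y → Bmeas (k + 1) (PathSp Y)), IsContr (k + 1) y₀ H}

/-- The classical `m`-th sequential topological complexity. -/
noncomputable def TCcl (m : ℕ) (X : Type*) [TopologicalSpace X] : ℕ∞ :=
  sInf {c : ℕ∞ | ∃ k : ℕ, c = k ∧
    ∃ (U : Fin (k + 1) → Set (Fin m → X)) (s : ∀ i : Fin (k + 1), C(U i, PathSp X)),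
      (∀ i, IsOpen (U i)) ∧ (∀ x, ∃ i, x ∈ U i) ∧
      ∀ (i : Fin (k + 1)) (x : U i) (j : Fin m), (s i x) (tpt m j) = (x : Fin m → X) j}

open Metric Set Filter Topology
open scoped ENNReal

section DiracCombination

variable {ι Z : Type*} [Fintype ι] [MeasurableSpace Z]

/-- Negative weights are read as `0`. -/
def diracCombination (a : ι → ℝ) (p : ι → Z) : Measure Z :=
  ∑ i, ENNReal.ofReal (a i) • Measure.dirac (p i)

lemma diracCombination_apply (a : ι → ℝ) (p : ι → Z) {B : Set Z} (hB : MeasurableSet B)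
    [DecidablePred (p · ∈ B)] :
    diracCombination a p B = ∑ i ∈ Finset.univ.filter (p · ∈ B), ENNReal.ofReal (a i) := by
  rw [diracCombination, Measure.finsetSum_apply, Finset.sum_filter]
  refine Finset.sum_congr rfl fun i _ => ?_
  rw [Measure.smul_apply, Measure.dirac_apply' _ hB, Set.indicator_apply]
  split_ifs <;> simp

lemma diracCombination_apply_eq_one {a : ι → ℝ} (ha : ∀ i, 0 ≤ a i) (h1 : ∑ i, a i = 1)
    {p : ι → Z} {B : Set Z} (hB : MeasurableSet B) (hpB : ∀ i, 0 < a i → p i ∈ B) :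
    diracCombination a p B = 1 := by
  classical
  rw [diracCombination_apply a p hB, Finset.sum_filter_of_ne fun i _ hi =>
    hpB i (ENNReal.ofReal_pos.1 (pos_iff_ne_zero.2 hi)),
    ← ENNReal.ofReal_sum_of_nonneg fun i _ => ha i, h1, ENNReal.ofReal_one]

lemma isProbabilityMeasure_diracCombination {a : ι → ℝ} (ha : ∀ i, 0 ≤ a i)
    (h1 : ∑ i, a i = 1) (p : ι → Z) : IsProbabilityMeasure (diracCombination a p) :=
  ⟨diracCombination_apply_eq_one ha h1 MeasurableSet.univ fun i _ => mem_univ (p i)⟩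

def probDiracCombination {a : ι → ℝ} (ha : ∀ i, 0 ≤ a i) (h1 : ∑ i, a i = 1) (p : ι → Z) :
    ProbabilityMeasure Z :=
  ⟨diracCombination a p, isProbabilityMeasure_diracCombination ha h1 p⟩

variable [PseudoMetricSpace Z] [OpensMeasurableSpace Z]

lemma diracCombination_le_thickening (a b : ι → ℝ) (p q : ι → Z) {ε : ℝ}
    (hab : ∑ i, |a i - b i| ≤ ε) (hpq : ∀ i, 0 < b i → dist (p i) (q i) < ε)
    {B : Set Z} (hB : MeasurableSet B) :
    diracCombination a p B ≤ diracCombination b q (thickening ε B) + ENNReal.ofReal ε := by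
  classical
  rw [diracCombination_apply a p hB, diracCombination_apply b q isOpen_thickening.measurableSet]
  calc ∑ i ∈ Finset.univ.filter (p · ∈ B), ENNReal.ofReal (a i)
      ≤ ∑ i ∈ Finset.univ.filter (p · ∈ B), (ENNReal.ofReal (b i) + ENNReal.ofReal |a i - b i|) :=
        Finset.sum_le_sum fun i _ =>
          (ENNReal.ofReal_le_ofReal (by linarith [le_abs_self (a i - b i)])).trans
            ENNReal.ofReal_add_le
    _ = ∑ i ∈ Finset.univ.filter (p · ∈ B), ENNReal.ofReal (b i)
        + ∑ i ∈ Finset.univ.filter (p · ∈ B), ENNReal.ofReal |a i - b i| :=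
        Finset.sum_add_distrib
    _ ≤ ∑ i ∈ Finset.univ.filter (q · ∈ thickening ε B), ENNReal.ofReal (b i)
        + ENNReal.ofReal ε := by
        refine add_le_add ?_ ?_
        · refine Finset.sum_le_sum_of_ne_zero fun i hi hne => ?_
          simp only [Finset.mem_filter, Finset.mem_univ, true_and] at hi ⊢
          have hdist := hpq i (ENNReal.ofReal_pos.1 (pos_iff_ne_zero.2 hne))
          exact mem_thickening_iff.2 ⟨p i, hi, by rw [dist_comm]; exact hdist⟩
        · calc ∑ i ∈ Finset.univ.filter (p · ∈ B), ENNReal.ofReal |a i - b i|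
              ≤ ∑ i, ENNReal.ofReal |a i - b i| :=
                Finset.sum_le_sum_of_subset (Finset.filter_subset _ _)
            _ = ENNReal.ofReal (∑ i, |a i - b i|) :=
                (ENNReal.ofReal_sum_of_nonneg fun i _ => abs_nonneg _).symm
            _ ≤ ENNReal.ofReal ε := ENNReal.ofReal_le_ofReal hab

lemma levyProkhorovEDist_diracCombination_le (a b : ι → ℝ) (p q : ι → Z) {δ : ℝ}
    (hab : ∑ i, |a i - b i| ≤ δ) (hpq : ∀ i, 0 < a i ∨ 0 < b i → dist (p i) (q i) < δ) :
    levyProkhorovEDist (diracCombination a p) (diracCombination b q) ≤ ENNReal.ofReal δ := by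
  have hδ : 0 ≤ δ := (Finset.sum_nonneg fun i _ => abs_nonneg _).trans hab
  refine levyProkhorovEDist_le_of_forall _ _ _ fun ε B hδε hε hB => ?_
  have hδε : δ < ε.toReal := (ENNReal.ofReal_lt_iff_lt_toReal hδ hε.ne).1 hδε
  have hεε : ENNReal.ofReal ε.toReal = ε := ENNReal.ofReal_toReal hε.ne
  constructor
  · simpa only [hεε] using diracCombination_le_thickening a b p q (hab.trans hδε.le)
      (fun i hi => (hpq i (Or.inr hi)).trans hδε) hB
  · have hba : ∑ i, |b i - a i| ≤ ε.toReal := by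
      simpa only [abs_sub_comm] using hab.trans hδε.le
    simpa only [hεε] using diracCombination_le_thickening b a q p hba
      (fun i hi => dist_comm (p i) (q i) ▸ (hpq i (Or.inl hi)).trans hδε) hB

lemma continuous_ofMeasure_probDiracCombination {Y : Type*} [TopologicalSpace Y] {a : ι → Y → ℝ}
    (ha : ∀ i, Continuous (a i)) (ha0 : ∀ i y, 0 ≤ a i y) (ha1 : ∀ y, ∑ i, a i y = 1)
    {p : ι → Y → Z} (hp : ∀ i, ∀ y ∈ tsupport (a i), ContinuousAt (p i) y) :
    Continuous fun y =>
      LevyProkhorov.ofMeasure (probDiracCombination (ha0 · y) (ha1 y) (p · y)) := by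
  refine continuous_iff_continuousAt.2 fun y₀ => Metric.tendsto_nhds.2 fun ε hε => ?_
  have hweights : ∀ᶠ y in 𝓝 y₀, ∑ i, |a i y - a i y₀| ≤ ε / 2 := by
    have hlim : Tendsto (fun y => ∑ i, |a i y - a i y₀|) (𝓝 y₀) (𝓝 0) := by
      have hcont : Continuous fun y => ∑ i, |a i y - a i y₀| :=
        continuous_finsetSum _ fun i _ => ((ha i).sub continuous_const).abs
      simpa using hcont.tendsto y₀
    exact hlim.eventually (ge_mem_nhds (half_pos hε))
  have hatoms : ∀ᶠ y in 𝓝 y₀, ∀ i, 0 < a i y ∨ 0 < a i y₀ → dist (p i y) (p i y₀) < ε / 2 := by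
    refine eventually_all.2 fun i => ?_
    by_cases hi : y₀ ∈ tsupport (a i)
    · filter_upwards [Metric.tendsto_nhds.1 (hp i y₀ hi) _ (half_pos hε)] with y hy _ using hy
    · filter_upwards [notMem_tsupport_iff_eventuallyEq.1 hi] with y hy
      rintro (h | h)
      · exact absurd hy h.ne'
      · exact absurd (image_eq_zero_of_notMem_tsupport hi) h.ne'
  filter_upwards [hweights, hatoms] with y hw hat
  calc dist _ _ = (levyProkhorovEDist (diracCombination (a · y) (p · y))
        (diracCombination (a · y₀) (p · y₀))).toReal := rfl
    _ ≤ ε / 2 := ENNReal.toReal_le_of_le_ofReal (half_pos hε).le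
        (levyProkhorovEDist_diracCombination_le _ _ _ _ hw hat)
    _ < ε := half_lt_self hε

end DiracCombination

lemma DistributedOn.mono {Z : Type*} [MetricSpace Z] {n : ℕ} {μ : Bmeas n Z} {A B : Set Z}
    (h : DistributedOn μ A) (hAB : A ⊆ B) : DistributedOn μ B :=
  let ⟨S, hSA, hS⟩ := h
  ⟨S, hSA.trans hAB, hS⟩

theorem exists_continuous_bmeas_of_openCover {ι Y Z : Type*} [Fintype ι] [TopologicalSpace Y]
    [NormalSpace Y] [MetricSpace Z] {n : ℕ} (hn : Fintype.card ι ≤ n) {U : ι → Set Y}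
    (hU : ∀ i, IsOpen (U i)) (hcover : ∀ y, ∃ i, y ∈ U i) (sec : ∀ i, C(U i, Z)) :
    ∃ s : Y → Bmeas n Z, Continuous s ∧
      ∀ y, DistributedOn (s y) {z | ∃ i, ∃ h : y ∈ U i, sec i ⟨y, h⟩ = z} := by
  classical
  let _ : MeasurableSpace Z := borel Z
  have : BorelSpace Z := ⟨rfl⟩
  obtain ⟨f, hf⟩ := PartitionOfUnity.exists_isSubordinate_of_locallyFinite isClosed_univ U hU
    (locallyFinite_of_finite U) fun y _ => mem_iUnion.2 (hcover y)
  have hf1 : ∀ y, ∑ i, f i y = 1 := fun y => by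
    simpa only [finsum_eq_sum_of_fintype] using f.sum_eq_one (mem_univ y)
  choose idx hidx using hcover
  -- off `U i` the atom `p i y` has weight `0`, so any point over `y` will do
  let p : ι → Y → Z := fun i y =>
    if h : y ∈ U i then sec i ⟨y, h⟩ else sec (idx y) ⟨y, hidx y⟩
  have hp : ∀ i y (h : y ∈ U i), p i y = sec i ⟨y, h⟩ := fun i y h => dif_pos h
  have hp_cont : ∀ i, ∀ y ∈ tsupport (f i), ContinuousAt (p i) y := by
    intro i y hy
    have hOn : ContinuousOn (p i) (U i) := by
      rw [continuousOn_iff_continuous_domRestrict]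
      convert (sec i).continuous using 1
      exact funext fun y => hp i y y.2
    exact hOn.continuousAt ((hU i).mem_nhds (hf i hy))
  let S : Y → Finset Z := fun y => (Finset.univ.filter (0 < f · y)).image (p · y)
  have hS : ∀ y, probDiracCombination (f.nonneg · y) (hf1 y) (p · y) (S y) = 1 := fun y => by
    rw [← ENNReal.coe_eq_one, ProbabilityMeasure.ennreal_coeFn_eq_coeFn_toMeasure]
    refine diracCombination_apply_eq_one (f.nonneg · y) (hf1 y) (S y).finite_toSet.measurableSet
      fun i hi => ?_
    simp only [S, Finset.coe_image, Finset.coe_filter]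
    exact mem_image_of_mem _ (by simpa using hi)
  refine ⟨fun y => ⟨LevyProkhorov.ofMeasure _, S y, ?_, hS y⟩,
    (continuous_ofMeasure_probDiracCombination (fun i => (f i).continuous) f.nonneg hf1
      hp_cont).subtype_mk _, fun y => ⟨S y, ?_, hS y⟩⟩
  · exact Finset.card_image_le.trans ((Finset.card_filter_le _ _).trans hn)
  · intro z hz
    simp only [S, Finset.coe_image, Finset.coe_filter, Finset.mem_univ, true_and, mem_image] at hz
    obtain ⟨i, hi, rfl⟩ := hz
    have hiU : y ∈ U i := hf i (subset_tsupport _ hi.ne')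
    exact ⟨i, hiU, (hp i y hiU).symm⟩

theorem dTC_le_TC_general (m : ℕ) (X : Type) [MetricSpace X] :
    dTC m X ≤ TCcl m X := by
  refine sInf_le_sInf ?_
  rintro _ ⟨k, rfl, U, sec, hU, hcover, hsec⟩
  obtain ⟨s, hs, hsupp⟩ :=
    exists_continuous_bmeas_of_openCover (Fintype.card_fin _).le hU hcover sec
  refine ⟨k, rfl, s, hs, fun x => (hsupp x).mono ?_⟩
  rintro φ ⟨i, hi, rfl⟩ j
  exact hsec i ⟨x, hi⟩ j

/-- For every `m ≥ 2` and every path-connected metric space `X`, `dTC_m(X) ≤ TC_m(X)`. -/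
theorem dTC_le_TC (m : ℕ) (hm : 2 ≤ m) (X : Type) [MetricSpace X] [PathConnectedSpace X] :
    dTC m X ≤ TCcl m X :=
  dTC_le_TC_general m X
end
end

section
/- For any Hurewicz fibration p : E → B between metric spaces and any n ≥ 1, the map B_n(p) : E_n(p) → B, where E_n(p) = ⋃_{x∈B} B_n(p^{-1}(x)) ⊆ B_n(E) and B_n(p)(μ) = x whenever supp(μ) ⊆ p^{-1}(x), is a Hurewicz fibration. -/
open MeasureTheory unitInterval

noncomputable section

/-- The homotopy lifting property with respect to all spaces (Hurewicz fibration). -/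
def IsHurFib {E B : Type*} [TopologicalSpace E] [TopologicalSpace B] (p : E → B) : Prop :=
  ∀ (Z : Type) [TopologicalSpace Z] (f : C(Z, E)) (H : C(Z × unitInterval, B)),
    (∀ z, H (z, 0) = p (f z)) →
      ∃ G : C(Z × unitInterval, E),
        (∀ z t, p (G (z, t)) = H (z, t)) ∧ ∀ z, G (z, 0) = f z

/-- `E_k(p)`: the space of probability measures supported on at most `k` points of a
single fiber of `p`, as a subspace of `B_k(E)`. -/
def FibMeas (k : ℕ) {E B : Type*} [MetricSpace E] (p : E → B) : Type _ :=
  {μ : Bmeas k E // ∃ b : B, DistributedOn μ (p ⁻¹' {b})}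

instance (k : ℕ) {E B : Type*} [MetricSpace E] (p : E → B) :
    TopologicalSpace (FibMeas k p) := instTopologicalSpaceSubtype

/-- The map `B_k(p) : E_k(p) → B` sending a fiberwise supported measure to its base point. -/
noncomputable def fibProj (k : ℕ) {E B : Type*} [MetricSpace E] (p : E → B)
    (μ : FibMeas k p) : B :=
  Classical.choose μ.2

/-- The distributional sectional category of a map `p : E → B`. -/
noncomputable def dsecat {E B : Type*} [MetricSpace E] [MetricSpace B] (p : E → B) : ℕ∞ :=
  sInf {c : ℕ∞ | ∃ k : ℕ, c = k ∧
    ∃ s : B → FibMeas (k + 1) p, Continuous s ∧ ∀ b, fibProj (k + 1) p (s b) = b}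

/-- The fibration `π_m : P(X) → X^m`, `φ ↦ (φ(t_1), …, φ(t_m))`. -/
def piFib (m : ℕ) (X : Type*) [TopologicalSpace X] (φ : PathSp X) : Fin m → X :=
  fun j => φ (tpt m j)

/-!
A Hurewicz fibration `p` has a lifting function `Λ`, which lifts a path `γ` in `B` starting at
`p e` to a path in `E` starting at `e`, continuously in `(e, γ)`. Given a homotopy `H` in `B`
starting at `B_n(p) ∘ f`, push the measure `f z` forward along `e ↦ Λ (e, H(z, ·)) t`: this moves
its at most `n` atoms into the fibre over `H (z, t)` and recovers `f z` at `t = 0`. Continuity in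
`(z, t)` holds because a Lévy–Prokhorov-small perturbation of a finitely supported measure moves
almost all of its mass close to its atoms, where the transport map is jointly continuous.
-/

open Topology Metric Set Filter

lemma MeasureTheory.ProbabilityMeasure.apply_eq_one_iff {Ω : Type*} [MeasurableSpace Ω]
    (ν : ProbabilityMeasure Ω) (s : Set Ω) : ν s = 1 ↔ (ν : Measure Ω) s = 1 := by
  rw [← ProbabilityMeasure.ennreal_coeFn_eq_coeFn_toMeasure]
  norm_cast

lemma MeasureTheory.ProbabilityMeasure.map_image_eq_one {Ω Ω' : Type*} [MeasurableSpace Ω]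
    [MeasurableSpace Ω'] [MeasurableSingletonClass Ω'] [DecidableEq Ω'] {ν : ProbabilityMeasure Ω}
    {g : Ω → Ω'} (hg : Measurable g) {S : Finset Ω} (hS : ν S = 1) :
    ν.map hg.aemeasurable ↑(S.image g) = 1 := by
  rw [ProbabilityMeasure.map_apply _ _ (S.image g).measurableSet]
  refine le_antisymm (ProbabilityMeasure.apply_le_one _ _) (hS ▸ ν.apply_mono fun e he => ?_)
  exact Finset.mem_coe.2 (Finset.mem_image_of_mem g he)

lemma levyProkhorovDist_map_le {E F : Type*} [PseudoMetricSpace E] [MeasurableSpace E]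
    [OpensMeasurableSpace E] [PseudoMetricSpace F] [MeasurableSpace F] [OpensMeasurableSpace F]
    {μ ν : Measure E} [IsProbabilityMeasure μ] [IsProbabilityMeasure ν]
    {g g₀ : E → F} (hg : Measurable g) (hg₀ : Measurable g₀)
    {S T : Set E} (hS : μ Sᶜ = 0) (hT : MeasurableSet T) (hνT : ν Tᶜ = 0)
    {δ ε : ℝ} (hδ : 0 < δ) (hε : 0 < ε)
    (hclose : ∀ e ∈ S, ∀ e' ∈ T, dist e e' < δ → dist (g e') (g₀ e) < ε)
    (hμν : levyProkhorovEDist μ ν < ENNReal.ofReal (min δ ε)) :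
    levyProkhorovDist (ν.map g) (μ.map g₀) ≤ ε := by
  have : IsProbabilityMeasure (ν.map g) := Measure.isProbabilityMeasure_map hg.aemeasurable
  have : IsProbabilityMeasure (μ.map g₀) := Measure.isProbabilityMeasure_map hg₀.aemeasurable
  refine levyProkhorovDist_le_of_forall_le _ _ hε.le fun ε' A hε' hA => ?_
  rw [Measure.map_apply hg hA, Measure.map_apply hg₀ isOpen_thickening.measurableSet]
  have hsub : thickening (min δ ε) (g ⁻¹' A ∩ T) ∩ S ⊆ g₀ ⁻¹' thickening ε' A := by
    rintro e ⟨he, heS⟩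
    obtain ⟨e', ⟨he'A, he'T⟩, hee'⟩ := mem_thickening_iff.1 he
    refine mem_thickening_iff.2 ⟨g e', he'A, ?_⟩
    rw [dist_comm]
    exact (hclose e heS e' he'T (hee'.trans_le (min_le_left _ _))).trans hε'
  calc ν (g ⁻¹' A) = ν (g ⁻¹' A ∩ T) := (measure_inter_conull hνT).symm
    _ ≤ μ (thickening (min δ ε) (g ⁻¹' A ∩ T)) + ENNReal.ofReal (min δ ε) := by
      have := right_measure_le_of_levyProkhorovEDist_lt hμν ((hg hA).inter hT)
      rwa [ENNReal.toReal_ofReal (lt_min hδ hε).le] at this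
    _ = μ (thickening (min δ ε) (g ⁻¹' A ∩ T) ∩ S) + ENNReal.ofReal (min δ ε) := by
      rw [measure_inter_conull hS]
    _ ≤ μ (g₀ ⁻¹' thickening ε' A) + ENNReal.ofReal ε' :=
      add_le_add (measure_mono hsub)
        (ENNReal.ofReal_le_ofReal ((min_le_right _ _).trans hε'.le))

section UniformNearFibres

variable {Y E F : Type*} [TopologicalSpace Y] [PseudoMetricSpace E] [PseudoMetricSpace F]
  {g : Y → E → F} {s : Y → Set E} {y₀ : Y} {ε : ℝ}

lemma ContinuousWithinAt.eventually_dist_lt {e : E}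
    (hg : ContinuousWithinAt (fun q : Y × E => g q.1 q.2) {q | q.2 ∈ s q.1} (y₀, e))
    (hε : 0 < ε) :
    ∀ᶠ δ in 𝓝[>] (0 : ℝ), ∀ᶠ y in 𝓝 y₀, ∀ e' ∈ s y,
      dist e e' < δ → dist (g y e') (g y₀ e) < ε := by
  obtain ⟨U, hUo, heU, hUs⟩ := mem_nhdsWithin.1 (hg (ball_mem_nhds _ hε))
  obtain ⟨V, hV, W, hW, hVW⟩ := mem_nhds_prod_iff.1 (hUo.mem_nhds heU)
  obtain ⟨δ₀, hδ₀, hball⟩ := Metric.mem_nhds_iff.1 hW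
  filter_upwards [Ioo_mem_nhdsGT hδ₀] with δ hδ
  filter_upwards [hV] with y hy e' he' hee'
  have hyU : (y, e') ∈ U := hVW ⟨hy, hball (by rw [mem_ball, dist_comm]; exact hee'.trans hδ.2)⟩
  exact hUs ⟨hyU, he'⟩

lemma ContinuousOn.exists_eventually_forall_finset_dist_lt
    (hg : ContinuousOn (fun q : Y × E => g q.1 q.2) {q | q.2 ∈ s q.1})
    {S : Finset E} (hS : ↑S ⊆ s y₀) (hε : 0 < ε) :
    ∃ δ > 0, ∀ᶠ y in 𝓝 y₀, ∀ e ∈ S, ∀ e' ∈ s y,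
      dist e e' < δ → dist (g y e') (g y₀ e) < ε := by
  obtain ⟨δ, hδ, hδS⟩ := (eventually_mem_nhdsWithin.and <| (eventually_all_finset S).2
    fun e he => (hg (y₀, e) (hS he)).eventually_dist_lt hε).exists
  exact ⟨δ, hδ, (eventually_all_finset S).2 hδS⟩

end UniformNearFibres

section LiftingFunction

variable {E B : Type*} [TopologicalSpace E] [TopologicalSpace B] {p : E → B}

abbrev PathPullback (p : E → B) : Type _ := {q : E × C(I, B) // p q.1 = q.2 0}

-- Extended by the identity off the fibre over `γ 0`, where the measures pushed along it vanish.
open Classical in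
def liftAlong (Λ : C(PathPullback p × I, E)) (γ : C(I, B)) (t : I) (e : E) : E :=
  if h : p e = γ 0 then Λ (⟨(e, γ), h⟩, t) else e

variable {Λ : C(PathPullback p × I, E)}

lemma liftAlong_of_mem {γ : C(I, B)} {e : E} (he : p e = γ 0) (t : I) :
    liftAlong Λ γ t e = Λ (⟨(e, γ), he⟩, t) :=
  dif_pos he

lemma mapsTo_liftAlong (hΛ : ∀ q t, p (Λ (q, t)) = q.1.2 t) (γ : C(I, B)) (t : I) :
    MapsTo (liftAlong Λ γ t) (p ⁻¹' {γ 0}) (p ⁻¹' {γ t}) := fun e he => by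
  rw [mem_preimage, liftAlong_of_mem he, hΛ]
  rfl

lemma eqOn_liftAlong_zero (hΛ : ∀ q, Λ (q, 0) = q.1.1) (γ : C(I, B)) :
    EqOn (liftAlong Λ γ 0) id (p ⁻¹' {γ 0}) := fun e he => by
  rw [liftAlong_of_mem he, hΛ]
  rfl

lemma continuousOn_liftAlong (Λ : C(PathPullback p × I, E)) :
    ContinuousOn (fun q : (C(I, B) × I) × E => liftAlong Λ q.1.1 q.1.2 q.2)
      {q | q.2 ∈ p ⁻¹' {q.1.1 0}} := by
  rw [continuousOn_iff_continuous_domRestrict]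
  have : domRestrict {q | q.2 ∈ p ⁻¹' {q.1.1 0}}
      (fun q : (C(I, B) × I) × E => liftAlong Λ q.1.1 q.1.2 q.2) =
      fun q => Λ (⟨(q.1.2, q.1.1.1), q.2⟩, q.1.1.2) := funext fun q => dif_pos q.2
  rw [this]
  fun_prop

end LiftingFunction

lemma IsHurFib.exists_liftingFunction {E B : Type} [TopologicalSpace E] [TopologicalSpace B]
    {p : E → B} (hp : IsHurFib p) :
    ∃ Λ : C(PathPullback p × I, E), (∀ q t, p (Λ (q, t)) = q.1.2 t) ∧ ∀ q, Λ (q, 0) = q.1.1 :=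
  hp _ ⟨fun q : PathPullback p => q.1.1, by fun_prop⟩
    ⟨fun qt : PathPullback p × I => qt.1.1.2 qt.2, by fun_prop⟩ fun q => q.2.symm

lemma borelSpace_borel (X : Type*) [TopologicalSpace X] : @BorelSpace X _ (borel X) :=
  @BorelSpace.mk X _ (borel X) rfl

section Bmeas

-- `Bmeas` is built on `borel E` directly, not on a `MeasurableSpace` instance.
attribute [local instance] borel borelSpace_borel

variable {n : ℕ} {E F B : Type*} [MetricSpace E] [MetricSpace F] {p : E → B}

def Bmeas.map (μ : Bmeas n E) (g : E → F) (hg : Measurable g) : Bmeas n F :=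
  ⟨LevyProkhorov.ofMeasure ((Bmeas.meas μ).map hg.aemeasurable), by
    classical
    obtain ⟨S, hcard, hS⟩ := μ.2
    exact ⟨S.image g, Finset.card_image_le.trans hcard, ProbabilityMeasure.map_image_eq_one hg hS⟩⟩

lemma DistributedOn.exists_finset {μ : Bmeas n E} {A : Set E} (h : DistributedOn μ A) :
    ∃ S : Finset E, ↑S ⊆ A ∧ (Bmeas.meas μ : Measure E) (↑S)ᶜ = 0 := by
  obtain ⟨S, hSA, hS⟩ := h
  exact ⟨S, hSA, (prob_compl_eq_zero_iff S.measurableSet).2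
    ((ProbabilityMeasure.apply_eq_one_iff _ _).1 hS)⟩

lemma DistributedOn.ae_mem {μ : Bmeas n E} {A : Set E} (h : DistributedOn μ A) :
    ∀ᵐ e ∂(Bmeas.meas μ : Measure E), e ∈ A := by
  obtain ⟨S, hSA, hS⟩ := h.exists_finset
  exact measure_mono_null (compl_subset_compl.2 hSA) hS

lemma DistributedOn.map {μ : Bmeas n E} {A : Set E} {A' : Set F} (h : DistributedOn μ A)
    {g : E → F} (hg : Measurable g) (hgA : MapsTo g A A') : DistributedOn (μ.map g hg) A' := by
  classical
  obtain ⟨S, hSA, hS⟩ := h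
  exact ⟨S.image g, by simpa using (hgA.mono_left hSA).image_subset,
    ProbabilityMeasure.map_image_eq_one hg hS⟩

lemma DistributedOn.map_eq_self {μ : Bmeas n E} {A : Set E} (h : DistributedOn μ A)
    {g : E → E} (hg : Measurable g) (hgA : EqOn g id A) : μ.map g hg = μ := by
  refine Subtype.ext (congrArg LevyProkhorov.ofMeasure (ProbabilityMeasure.toMeasure_injective ?_))
  rw [ProbabilityMeasure.toMeasure_map, Measure.map_congr (h.ae_mem.mono hgA), Measure.map_id]
  rfl

lemma DistributedOn.eq_of_preimage_singleton {μ : Bmeas n E} {b b' : B}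
    (h : DistributedOn μ (p ⁻¹' {b})) (h' : DistributedOn μ (p ⁻¹' {b'})) : b = b' := by
  obtain ⟨e, he, he'⟩ := (h.ae_mem.and h'.ae_mem).exists
  exact he.symm.trans he'

lemma Bmeas.continuous_map {Y : Type*} [TopologicalSpace Y] {ν : Y → Bmeas n E}
    (hν : Continuous ν) {s : Y → Set E} (hνs : ∀ y, DistributedOn (ν y) (s y))
    {g : Y → E → F} (hg : ∀ y, Measurable (g y))
    (hgc : ContinuousOn (fun q : Y × E => g q.1 q.2) {q | q.2 ∈ s q.1}) :
    Continuous fun y => (ν y).map (g y) (hg y) := by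
  refine Continuous.subtype_mk (continuous_iff_continuousAt.2 fun y₀ => ?_) _
  refine Metric.tendsto_nhds.2 fun ε hε => ?_
  choose T hTs hT using fun y => (hνs y).exists_finset
  obtain ⟨δ, hδ, hclose⟩ := hgc.exists_eventually_forall_finset_dist_lt (hTs y₀) (half_pos hε)
  have hnear : ∀ᶠ y in 𝓝 y₀, dist (ν y).1 (ν y₀).1 < min δ (ε / 2) :=
    (continuous_subtype_val.comp hν).tendsto y₀ (ball_mem_nhds _ (lt_min hδ (half_pos hε)))
  filter_upwards [hclose, hnear] with y hy hyd
  refine lt_of_le_of_lt ?_ (half_lt_self hε)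
  exact levyProkhorovDist_map_le (hg y) (hg y₀) (hT y₀) (T y).measurableSet (hT y) hδ
    (half_pos hε) (fun e he e' he' hee' => hy e he e' (hTs y he') hee')
    (edist_lt_ofReal.2 (by rwa [dist_comm] at hyd))

lemma distributedOn_fibProj (μ : FibMeas n p) : DistributedOn μ.1 (p ⁻¹' {fibProj n p μ}) :=
  Classical.choose_spec μ.2

lemma fibProj_eq_of_distributedOn (μ : FibMeas n p) {b : B}
    (h : DistributedOn μ.1 (p ⁻¹' {b})) : fibProj n p μ = b :=
  (distributedOn_fibProj μ).eq_of_preimage_singleton h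

lemma measurable_liftAlong [MetricSpace B] (hp : Continuous p) (Λ : C(PathPullback p × I, E))
    (γ : C(I, B)) (t : I) :
    Measurable (liftAlong Λ γ t) := by
  classical
  exact Measurable.dite (s := p ⁻¹' {γ 0}) (f := fun e => Λ (⟨(e.1, γ), e.2⟩, t))
    (Λ.continuous.comp (by fun_prop)).measurable measurable_subtype_coe
    (isClosed_singleton.preimage hp).measurableSet

end Bmeas

theorem fibProj_isHurFib_general (n : ℕ) (E B : Type) [MetricSpace E] [MetricSpace B]
    (p : E → B) (hp : Continuous p) (hfib : IsHurFib p) :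
    IsHurFib (fibProj n p) := by
  obtain ⟨Λ, hΛp, hΛ0⟩ := hfib.exists_liftingFunction
  intro Z _ f H hH0
  have hf : ∀ z, DistributedOn (f z).1 (p ⁻¹' {H (z, 0)}) := fun z =>
    hH0 z ▸ distributedOn_fibProj (f z)
  let G : Z × I → Bmeas n E := fun w =>
    (f w.1).1.map (liftAlong Λ (H.curry w.1) w.2) (measurable_liftAlong hp Λ _ _)
  have hG : ∀ w, DistributedOn (G w) (p ⁻¹' {H w}) := fun w =>
    (hf w.1).map _ (mapsTo_liftAlong hΛp _ _)
  have hGc : Continuous G :=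
    Bmeas.continuous_map (by fun_prop : Continuous fun w : Z × I => (f w.1).1) (fun w => hf w.1) _
      ((continuousOn_liftAlong Λ).comp (Continuous.continuousOn
        (f := fun q : (Z × I) × E => ((H.curry q.1.1, q.1.2), q.2)) (by fun_prop)) fun _ h => h)
  refine ⟨⟨fun w => ⟨G w, H w, hG w⟩, hGc.subtype_mk _⟩,
    fun z t => fibProj_eq_of_distributedOn _ (hG (z, t)), fun z => Subtype.ext ?_⟩
  exact (hf z).map_eq_self (measurable_liftAlong hp Λ _ _) (eqOn_liftAlong_zero hΛ0 _)

/-- For a Hurewicz fibration `p : E → B` of metric spaces, the map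
`B_n(p) : E_n(p) → B` is again a Hurewicz fibration. -/
theorem fibProj_isHurFib (n : ℕ) (hn : 1 ≤ n) (E B : Type) [MetricSpace E] [MetricSpace B]
    (p : E → B) (hp : Continuous p) (hfib : IsHurFib p) :
    IsHurFib (fibProj n p) :=
  fibProj_isHurFib_general n E B p hp hfib
end
end
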